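/- Let γ be the hyperelliptic involution of a smooth projective curve C of genus 2 with hyperelliptic map ψ: C → P¹ branched over a set B of 6 points. Suppose Z/3 acts faithfully on C with rational quotient; then the induced Z/3-action on P¹ preserves B, B is the union of two free Z/3-orbits, and the two fixed points of Z/3 on P¹ do not lie in B. -/

import Mathlib

section Aux
variable {P : Type*} (σ : Equiv.Perm P)

private lemma cube_fix (h3 : σ ^ 3 = 1) (x : P) : σ (σ (σ x)) = x := by
  have := Equiv.ext_iff.mp h3 x
  simpa [pow_succ, Equiv.Perm.mul_apply] using this

private lemma orbit_distinct (h3 : σ ^ 3 = 1) {x : P} (hx : σ x ≠ x) :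
    σ (σ x) ≠ x ∧ σ (σ x) ≠ σ x := by
  constructor
  · intro h
    apply hx
    have := congrArg σ h
    rw [cube_fix σ h3] at this
    exact this.symm
  · intro h
    exact hx (σ.injective h)

private lemma orbit_ncard (h3 : σ ^ 3 = 1) {x : P} (hx : σ x ≠ x) :
    ({x, σ x, σ (σ x)} : Set P).ncard = 3 := by
  obtain ⟨h1, h2⟩ := orbit_distinct σ h3 hx
  rw [Set.ncard_eq_three]
  exact ⟨x, σ x, σ (σ x), Ne.symm hx, Ne.symm h1, Ne.symm h2, rfl⟩

private lemma diff_stable (h3 : σ ^ 3 = 1) {S : Set P} (hS : ∀ x ∈ S, σ x ∈ S)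
    (x : P) :
    ∀ y ∈ S \ {x, σ x, σ (σ x)}, σ y ∈ S \ {x, σ x, σ (σ x)} := by
  rintro y ⟨hyS, hyO⟩
  refine ⟨hS y hyS, fun h => hyO ?_⟩
  simp only [Set.mem_insert_iff, Set.mem_singleton_iff] at h ⊢
  rcases h with h | h | h
  · right; right
    apply σ.injective
    rw [cube_fix σ h3, h]
  · left; exact σ.injective h
  · right; left; exact σ.injective h

private lemma free_dvd (h3 : σ ^ 3 = 1) :
    ∀ n (S : Set P), S.Finite → S.ncard = n → (∀ x ∈ S, σ x ∈ S) →
      (∀ x ∈ S, σ x ≠ x) → 3 ∣ n := by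
  intro n
  induction n using Nat.strong_induction_on with
  | _ n ih =>
    intro S hfin hcard hstab hfree
    rcases S.eq_empty_or_nonempty with rfl | ⟨x, hx⟩
    · simp only [Set.ncard_empty] at hcard; omega
    · have hO3 : ({x, σ x, σ (σ x)} : Set P).ncard = 3 :=
        orbit_ncard σ h3 (hfree x hx)
      have hOsub : ({x, σ x, σ (σ x)} : Set P) ⊆ S := by
        intro y hy
        simp only [Set.mem_insert_iff, Set.mem_singleton_iff] at hy
        rcases hy with rfl | rfl | rfl
        · exact hx
        · exact hstab x hx
        · exact hstab _ (hstab x hx)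
      have hn3 : 3 ≤ n := by
        rw [← hcard, ← hO3]
        exact Set.ncard_le_ncard hOsub hfin
      have hdiff : (S \ {x, σ x, σ (σ x)}).ncard = n - 3 := by
        rw [Set.ncard_diff hOsub (hfin.subset hOsub), hcard, hO3]
      have := ih (n - 3) (by omega) (S \ {x, σ x, σ (σ x)}) hfin.diff hdiff
        (diff_stable σ h3 hstab x) (fun y hy => hfree y hy.1)
      omega

end Aux

/-- Let `C` be a smooth genus-2 curve with hyperelliptic involution `γ`, hyperelliptic
map `ψ : C → ℙ¹` branched over a set `B` of `6` points, and a faithful `ℤ/3`-action with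
rational quotient.  The induced `ℤ/3`-action on `ℙ¹ = C/γ` (here an order-3 automorphism
`σ` of the set `P` of points of `ℙ¹`, which has exactly two fixed points) preserves `B`;
then `B` is the union of two (disjoint, free) `ℤ/3`-orbits and the two fixed points of
`σ` on `ℙ¹` do not lie in `B`. -/
theorem branch_locus_is_two_free_orbits
    (P : Type*) (σ : Equiv.Perm P) (hord : orderOf σ = 3)
    (hfix : Set.ncard {x : P | σ x = x} = 2)
    (B : Set P) (hB6 : B.ncard = 6) (hBfin : B.Finite)
    (hstable : ∀ x ∈ B, σ x ∈ B) :
    (∀ x ∈ B, σ x ≠ x) ∧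
    ∃ x y, x ∈ B ∧ y ∈ B ∧
      B = {x, σ x, σ (σ x), y, σ y, σ (σ y)} ∧
      ({x, σ x, σ (σ x)} : Set P) ∩ {y, σ y, σ (σ y)} = ∅ ∧
      Set.ncard ({x, σ x, σ (σ x)} : Set P) = 3 ∧
      Set.ncard ({y, σ y, σ (σ y)} : Set P) = 3 := by
  have h3 : σ ^ 3 = 1 := by rw [← hord]; exact pow_orderOf_eq_one σ
  -- the fixed-point set is finite
  have hfixfin : Set.Finite {x : P | σ x = x} := by
    by_contra h
    rw [Set.Infinite.ncard h] at hfix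
    omega
  -- part 1: no fixed points in B
  set F : Set P := B ∩ {x : P | σ x = x} with hF
  have hFsub : F ⊆ {x : P | σ x = x} := Set.inter_subset_right
  have hFle : F.ncard ≤ 2 := by
    rw [← hfix]; exact Set.ncard_le_ncard hFsub hfixfin
  have hFsubB : F ⊆ B := Set.inter_subset_left
  have hBFstab : ∀ y ∈ B \ F, σ y ∈ B \ F := by
    rintro y ⟨hyB, hyF⟩
    refine ⟨hstable y hyB, fun hmem => hyF ?_⟩
    have hfixy : σ (σ y) = σ y := hmem.2
    have : σ y = y := σ.injective hfixy
    exact ⟨hyB, this⟩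
  have hBFfree : ∀ y ∈ B \ F, σ y ≠ y := by
    rintro y ⟨hyB, hyF⟩ h
    exact hyF ⟨hyB, h⟩
  have hdvd : 3 ∣ (B \ F).ncard :=
    free_dvd σ h3 _ (B \ F) hBfin.diff rfl hBFstab hBFfree
  have hcardBF : (B \ F).ncard = 6 - F.ncard := by
    rw [Set.ncard_diff hFsubB (hBfin.subset hFsubB), hB6]
  have hF0 : F.ncard = 0 := by omega
  have hFempty : F = ∅ := Set.ncard_eq_zero (hBfin.subset hFsubB) |>.mp hF0
  have part1 : ∀ x ∈ B, σ x ≠ x := by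
    intro x hx h
    have : x ∈ F := ⟨hx, h⟩
    rw [hFempty] at this
    exact this
  refine ⟨part1, ?_⟩
  -- part 2
  obtain ⟨x, hx⟩ : B.Nonempty := Set.nonempty_of_ncard_ne_zero (by omega)
  have hO3 : ({x, σ x, σ (σ x)} : Set P).ncard = 3 := orbit_ncard σ h3 (part1 x hx)
  have hOsub : ({x, σ x, σ (σ x)} : Set P) ⊆ B := by
    intro y hy
    simp only [Set.mem_insert_iff, Set.mem_singleton_iff] at hy
    rcases hy with rfl | rfl | rfl
    · exact hx
    · exact hstable x hx
    · exact hstable _ (hstable x hx)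
  have hdiffcard : (B \ {x, σ x, σ (σ x)}).ncard = 3 := by
    rw [Set.ncard_diff hOsub (hBfin.subset hOsub), hB6, hO3]
  obtain ⟨y, hy⟩ : (B \ {x, σ x, σ (σ x)}).Nonempty :=
    Set.nonempty_of_ncard_ne_zero (by omega)
  have hyB : y ∈ B := hy.1
  have hOy3 : ({y, σ y, σ (σ y)} : Set P).ncard = 3 := orbit_ncard σ h3 (part1 y hyB)
  have hOysub : ({y, σ y, σ (σ y)} : Set P) ⊆ B \ {x, σ x, σ (σ x)} := by
    intro z hz
    simp only [Set.mem_insert_iff, Set.mem_singleton_iff] at hz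
    rcases hz with rfl | rfl | rfl
    · exact hy
    · exact diff_stable σ h3 hstable x y hy
    · exact diff_stable σ h3 hstable x _ (diff_stable σ h3 hstable x y hy)
  have hOyeq : ({y, σ y, σ (σ y)} : Set P) = B \ {x, σ x, σ (σ x)} :=
    Set.eq_of_subset_of_ncard_le hOysub (by rw [hdiffcard, hOy3]) hBfin.diff
  refine ⟨x, y, hx, hyB, ?_, ?_, hO3, hOy3⟩
  · have : B = {x, σ x, σ (σ x)} ∪ (B \ {x, σ x, σ (σ x)}) :=
      (Set.union_diff_cancel hOsub).symm
    rw [this, ← hOyeq]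
    ext z
    simp only [Set.mem_union, Set.mem_insert_iff, Set.mem_singleton_iff]
    tauto
  · ext z
    simp only [Set.mem_inter_iff, Set.mem_empty_iff_false, iff_false, not_and]
    intro hz1 hz2
    have := hOysub hz2
    exact this.2 hz1
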